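/- Let (P₁, P₂) be a 2-partition of distinct reals y₁,...,yₙ, and suppose y_α, y_β ∈ P₁, y_γ ∈ P₂ with y_α > y_β > y_γ, and these are the only reversed pairs between P₁ and P₂. Then swapping the pair (y_α, y_γ) between the groups reduces the total within-group sum of squares SS(P₁) + SS(P₂) by at least as much as swapping the pair (y_β, y_γ). -/

import Mathlib

open Finset

noncomputable def mu (P : Finset ℝ) : ℝ := (∑ y ∈ P, y) / P.card

noncomputable def SS (P : Finset ℝ) : ℝ := ∑ y ∈ P, (y - mu P) ^ 2

/-! Swapping `a ∈ P₁` with `b ∈ P₂` reduces `SS P₁ + SS P₂` by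
`2 (a - b) (μ(P₂) - μ(P₁)) + (a - b)² (1/|P₁| + 1/|P₂|)`. When `μ(P₁) ≤ μ(P₂)` this is increasing in the
gap `a - b ≥ 0`, and the gap `y_α - y_γ` exceeds `y_β - y_γ`. -/

lemma SS_eq_sum_sq_sub (P : Finset ℝ) :
    SS P = ∑ y ∈ P, y ^ 2 - (∑ y ∈ P, y) ^ 2 / P.card := by
  rcases P.eq_empty_or_nonempty with rfl | hP
  · simp [SS]
  have hn : (P.card : ℝ) ≠ 0 := by exact_mod_cast hP.card_pos.ne'
  simp only [SS, mu, sub_sq, sum_add_distrib, sum_sub_distrib, ← sum_mul, sum_const, nsmul_eq_mul]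
  field_simp
  rw [← mul_sum]
  ring

lemma SS_insert_erase {P : Finset ℝ} {a b : ℝ} (ha : a ∈ P) (hb : b ∉ P) :
    SS (insert b (P.erase a)) = SS P + (b - a) * (b + a - 2 * mu P) - (b - a) ^ 2 / P.card := by
  have hn : (P.card : ℝ) ≠ 0 := by exact_mod_cast (card_pos.mpr ⟨a, ha⟩).ne'
  have hb' : b ∉ P.erase a := fun h => hb (mem_of_mem_erase h)
  have hcard : (insert b (P.erase a)).card = P.card := by
    rw [card_insert_of_notMem hb', card_erase_add_one ha]
  rw [SS_eq_sum_sq_sub, SS_eq_sum_sq_sub, hcard, sum_insert hb', sum_insert hb',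
    sum_erase_eq_sub ha, sum_erase_eq_sub ha, mu]
  field_simp
  ring

lemma SS_add_SS_sub_SS_swap {P₁ P₂ : Finset ℝ} (hdisj : Disjoint P₁ P₂) {a b : ℝ}
    (ha : a ∈ P₁) (hb : b ∈ P₂) :
    (SS P₁ + SS P₂) - (SS (insert b (P₁.erase a)) + SS (insert a (P₂.erase b)))
      = 2 * (a - b) * (mu P₂ - mu P₁)
        + (a - b) ^ 2 * ((P₁.card : ℝ)⁻¹ + (P₂.card : ℝ)⁻¹) := by
  rw [SS_insert_erase ha (disjoint_right.mp hdisj hb),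
    SS_insert_erase hb (disjoint_left.mp hdisj ha)]
  ring

theorem stmt_5_general (P₁ P₂ : Finset ℝ) (hdisj : Disjoint P₁ P₂)
    (hmu : mu P₁ < mu P₂)
    (yα yβ yγ : ℝ) (hα : yα ∈ P₁) (hβ : yβ ∈ P₁) (hγ : yγ ∈ P₂)
    (hαβ : yβ < yα) (hβγ : yγ < yβ) :
    (SS P₁ + SS P₂)
        - (SS (insert yγ (P₁.erase yβ)) + SS (insert yβ (P₂.erase yγ)))
      ≤ (SS P₁ + SS P₂)
        - (SS (insert yγ (P₁.erase yα)) + SS (insert yα (P₂.erase yγ))) := by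
  rw [SS_add_SS_sub_SS_swap hdisj hβ hγ, SS_add_SS_sub_SS_swap hdisj hα hγ]
  have hc : 0 ≤ mu P₂ - mu P₁ := by linarith
  have hgap : 0 ≤ yβ - yγ := by linarith
  gcongr

theorem stmt_5 (P₁ P₂ : Finset ℝ) (hdisj : Disjoint P₁ P₂)
    (h₁ : 2 ≤ P₁.card) (h₂ : 2 ≤ P₂.card)
    (hmu : mu P₁ < mu P₂)
    (yα yβ yγ : ℝ) (hα : yα ∈ P₁) (hβ : yβ ∈ P₁) (hγ : yγ ∈ P₂)
    (hαβ : yβ < yα) (hβγ : yγ < yβ)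
    (honly : ∀ a ∈ P₁, ∀ b ∈ P₂, b < a → (a = yα ∧ b = yγ) ∨ (a = yβ ∧ b = yγ)) :
    (SS P₁ + SS P₂)
        - (SS (insert yγ (P₁.erase yβ)) + SS (insert yβ (P₂.erase yγ)))
      ≤ (SS P₁ + SS P₂)
        - (SS (insert yγ (P₁.erase yα)) + SS (insert yα (P₂.erase yγ))) :=
  stmt_5_general P₁ P₂ hdisj hmu yα yβ yγ hα hβ hγ hαβ hβγ
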